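/- Let E be a real normed vector space, λ : E → (E →L[ℝ] ℝ) a differentiable 1-form, Z : E → E a differentiable vector field with ι_Z dλ = λ, f : E → ℝ a differentiable function, and h : E × ℝ → ℝ a differentiable function such that D_p h(p,θ)(Z p) = h(p,θ) for all (p,θ). Fix t ∈ ℝ and define the 1-form Λ_t on Ē := E × ℝ × ℝ by Λ_t(p,s,θ)(v,c,d) := λ_p(v) + (2s + t·h(p,θ))·d, with exterior derivative dΛ_t, and define f^𝒟 : Ē → ℝ by f^𝒟(p,s,θ) := s² + f(p). Fix a point (p,s,θ) with D := 2s² + Df(p)(Z p) > 0 and set Y := (h(p,θ)/(2D)) · (2s·Z p, −Df(p)(Z p), 0) ∈ E × ℝ × ℝ. Then: (i) Df^𝒟(p,s,θ)(Y) = 0; (ii) Λ_t(p,s,θ)(Y) = 0; (iii) for every (v,c,d) ∈ E × ℝ × ℝ, dΛ_t at (p,s,θ) evaluated on (Y, (v,c,d)) equals (2s·h(p,θ)/(2D))·Λ_t(p,s,θ)(v,c,d) − h(p,θ)·d. (That is, the vector field Y = (h_θ/(2 df^𝒟(Z^𝒟)))·(2s Z − df(Z)∂_s) is tangent to the level sets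 of f^𝒟, lies in ker Λ_t, and satisfies ι_Y dΛ_t = (2s h_θ/(2 df^𝒟(Z^𝒟)))·Λ_t − (d/dt)Λ_t.) -/

import Mathlib

/-!
Write `Λ_t = pr₁^*λ + g·dθ` with `g = 2s + t·h`. Then
`dΛ_t(u, w) = dλ(u₁, w₁) + Dg(u)·w_θ − Dg(w)·u_θ`, and since `Y` has no `θ`-component,
`ι_Y dΛ_t = ι_{Y₁} dλ + Dg(Y)·dθ`. The Liouville condition `ι_Z dλ = λ` (which forces
`λ(Z) = 0`) turns the first term into `(2s·h/(2D))·λ`, and the homogeneity `D_p h(Z) = h` gives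
`Dg(Y) = (h/(2D))·(2s·t·h − 2·Df(Z))`; this is the `dθ`-coefficient of the right-hand side
because `2D − 4s² = 2·Df(Z)`.
-/

open ContinuousLinearMap

section OneForm

variable {E F : Type*} [NormedAddCommGroup E] [NormedSpace ℝ E]
  [NormedAddCommGroup F] [NormedSpace ℝ F]

lemma apply_self_eq_zero_of_forall_fderiv_apply_sub {lam : E → E →L[ℝ] ℝ} {p z : E}
    (hL : ∀ v, fderiv ℝ lam p z v - fderiv ℝ lam p v z = lam p v) : lam p z = 0 := by
  simpa using (hL z).symm

lemma fderiv_comp_prodMk_left_apply {h : E × F → ℝ} {p : E} {θ : F}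
    (hh : DifferentiableAt ℝ h (p, θ)) (v : E) :
    fderiv ℝ (fun x => h (x, θ)) p v = fderiv ℝ h (p, θ) (v, 0) := by
  have hd : HasFDerivAt (fun x => h (x, θ)) ((fderiv ℝ h (p, θ)).comp (inl ℝ E F)) p :=
    hh.hasFDerivAt.comp p (hasFDerivAt_prodMk_left p θ)
  rw [hd.fderiv]
  rfl

lemma hasFDerivAt_pullback_add_smul {lam : E → E →L[ℝ] ℝ} {L : E →L[ℝ] E →L[ℝ] ℝ}
    {g : E × F → ℝ} {g' : E × F →L[ℝ] ℝ} {x : E × F} (μ : E × F →L[ℝ] ℝ)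
    (hlam : HasFDerivAt lam L x.1) (hg : HasFDerivAt g g' x) :
    HasFDerivAt (fun y => (lam y.1).comp (fst ℝ E F) + g y • μ)
      (((compL ℝ (E × F) E ℝ).flip (fst ℝ E F)).comp (L.comp (fst ℝ E F)) + g'.smulRight μ) x :=
  ((((compL ℝ (E × F) E ℝ).flip (fst ℝ E F)).hasFDerivAt).comp x
    (hlam.comp x hasFDerivAt_fst)).add (hg.smul_const μ)

lemma fderiv_pullback_add_smul_apply_sub {lam : E → E →L[ℝ] ℝ} {g : E × F → ℝ} {x : E × F}
    (μ : E × F →L[ℝ] ℝ) (hlam : DifferentiableAt ℝ lam x.1) (hg : DifferentiableAt ℝ g x)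
    (u w : E × F) :
    fderiv ℝ (fun y => (lam y.1).comp (fst ℝ E F) + g y • μ) x u w
        - fderiv ℝ (fun y => (lam y.1).comp (fst ℝ E F) + g y • μ) x w u
      = (fderiv ℝ lam x.1 u.1 w.1 - fderiv ℝ lam x.1 w.1 u.1)
        + (fderiv ℝ g x u * μ w - fderiv ℝ g x w * μ u) := by
  rw [(hasFDerivAt_pullback_add_smul μ hlam.hasFDerivAt hg.hasFDerivAt).fderiv]
  simp only [add_apply, comp_apply, flip_apply, compL_apply, coe_fst', smulRight_apply,
    smul_apply, smul_eq_mul]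
  ring

lemma fderiv_sq_add_apply {f : E → ℝ} {x : E × ℝ × F} (hf : DifferentiableAt ℝ f x.1)
    (w : E × ℝ × F) :
    fderiv ℝ (fun y : E × ℝ × F => y.2.1 ^ 2 + f y.1) x w
      = 2 * x.2.1 * w.2.1 + fderiv ℝ f x.1 w.1 := by
  have hsq : HasFDerivAt (fun y : E × ℝ × F => y.2.1 ^ 2)
      ((2 * x.2.1) • (fst ℝ ℝ F).comp (snd ℝ E (ℝ × F))) x := by
    simpa using ((fst ℝ ℝ F).comp (snd ℝ E (ℝ × F))).hasFDerivAt.pow 2 (x := x)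
  have hd : HasFDerivAt (fun y : E × ℝ × F => y.2.1 ^ 2 + f y.1) _ x :=
    hsq.add (hf.hasFDerivAt.comp x hasFDerivAt_fst)
  rw [hd.fderiv]
  simp

lemma fderiv_two_mul_add_mul_apply {h : E × F → ℝ} (t : ℝ) {x : E × ℝ × F}
    (hh : DifferentiableAt ℝ h (x.1, x.2.2)) (w : E × ℝ × F) :
    fderiv ℝ (fun y : E × ℝ × F => 2 * y.2.1 + t * h (y.1, y.2.2)) x w
      = 2 * w.2.1 + t * fderiv ℝ h (x.1, x.2.2) (w.1, w.2.2) := by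
  have hpr : HasFDerivAt (fun y : E × ℝ × F => (y.1, y.2.2))
      ((fst ℝ E (ℝ × F)).prod ((snd ℝ ℝ F).comp (snd ℝ E (ℝ × F)))) x :=
    ((fst ℝ E (ℝ × F)).prod ((snd ℝ ℝ F).comp (snd ℝ E (ℝ × F)))).hasFDerivAt
  have hsnd : HasFDerivAt (fun y : E × ℝ × F => y.2.1) ((fst ℝ ℝ F).comp (snd ℝ E (ℝ × F))) x :=
    ((fst ℝ ℝ F).comp (snd ℝ E (ℝ × F))).hasFDerivAt
  have hd : HasFDerivAt (fun y : E × ℝ × F => 2 * y.2.1 + t * h (y.1, y.2.2)) _ x :=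
    (hsnd.const_mul 2).add ((hh.hasFDerivAt.comp x hpr).const_mul t)
  rw [hd.fderiv]
  simp

end OneForm

theorem stmt_11_general {E : Type*} [NormedAddCommGroup E] [NormedSpace ℝ E]
    (lam : E → (E →L[ℝ] ℝ)) (Z : E → E)
    (hlam : Differentiable ℝ lam)
    (hLiouville : ∀ p v : E,
      (fderiv ℝ lam p (Z p)) v - (fderiv ℝ lam p v) (Z p) = lam p v)
    (f : E → ℝ) (hf : Differentiable ℝ f)
    (h : E × ℝ → ℝ) (hh : Differentiable ℝ h)
    (hhZ : ∀ (q : E) (θ : ℝ), fderiv ℝ (fun x : E => h (x, θ)) q (Z q) = h (q, θ))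
    (t : ℝ)
    (Lam : E × ℝ × ℝ → ((E × ℝ × ℝ) →L[ℝ] ℝ))
    (hLam : ∀ (q : E) (s θ : ℝ) (v : E) (c d : ℝ),
      Lam (q, s, θ) (v, c, d) = lam q v + (2 * s + t * h (q, θ)) * d)
    (p : E) (s θ : ℝ) (D : ℝ)
    (hD : D = 2 * s ^ 2 + fderiv ℝ f p (Z p)) (hDpos : 0 < D)
    (Y : E × ℝ × ℝ)
    (hY : Y = (h (p, θ) / (2 * D)) • (((2 * s) • Z p, -fderiv ℝ f p (Z p), 0) : E × ℝ × ℝ)) :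
    fderiv ℝ (fun x : E × ℝ × ℝ => x.2.1 ^ 2 + f x.1) (p, s, θ) Y = 0 ∧
    Lam (p, s, θ) Y = 0 ∧
    (∀ (v : E) (c d : ℝ),
      (fderiv ℝ Lam (p, s, θ) Y) (v, c, d) - (fderiv ℝ Lam (p, s, θ) (v, c, d)) Y
        = (2 * s * h (p, θ) / (2 * D)) * Lam (p, s, θ) (v, c, d) - h (p, θ) * d) := by
  have hlamZ : lam p (Z p) = 0 := apply_self_eq_zero_of_forall_fderiv_apply_sub (hLiouville p)
  have hhZ' (r : ℝ) : fderiv ℝ h (p, θ) (r • Z p, 0) = r * h (p, θ) := by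
    rw [← fderiv_comp_prodMk_left_apply (hh (p, θ)), map_smul, hhZ, smul_eq_mul]
  have hLam' : Lam = fun x => (lam x.1).comp (fst ℝ E (ℝ × ℝ))
      + (2 * x.2.1 + t * h (x.1, x.2.2)) • (snd ℝ ℝ ℝ).comp (snd ℝ E (ℝ × ℝ)) := by
    funext ⟨q, r, φ⟩
    exact ContinuousLinearMap.ext fun ⟨v, c, d⟩ => by simp [hLam]
  have hD0 : D ≠ 0 := hDpos.ne'
  refine ⟨?_, ?_, fun v c d => ?_⟩
  · rw [fderiv_sq_add_apply (hf p), hY]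
    simp only [Prod.smul_fst, Prod.smul_snd, map_smul, smul_eq_mul]
    field_simp
    rw [hD]; ring
  · rw [hY, map_smul, hLam']
    simp [hlamZ]
  · rw [hLam', fderiv_pullback_add_smul_apply_sub _ (hlam p) (by fun_prop),
      fderiv_two_mul_add_mul_apply t (hh _), ← hLam', hLam, hY]
    simp only [Prod.smul_fst, Prod.smul_snd, map_smul, smul_eq_mul, coe_comp, coe_snd',
      Function.comp_apply, smul_apply, mul_zero, sub_zero]
    rw [smul_smul, hhZ']
    field_simp
    linear_combination s * h (p, θ) * hLiouville p v + h (p, θ) * d * hD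

/-- At a point `(p,s,θ)` with `D = 2s² + Df(p)(Z p) > 0`, the vector
`Y = (h(p,θ)/(2D))·(2s·Z p, −Df(p)(Z p), 0)` is tangent to the level sets of
`f^𝒟(p,s,θ) = s² + f(p)`, lies in `ker Λ_t`, and satisfies
`ι_Y dΛ_t = (2s·h(p,θ)/(2D))·Λ_t − (d/dt)Λ_t`, where
`Λ_t(p,s,θ)(v,c,d) = λ_p(v) + (2s + t·h(p,θ))·d` and `ι_Z dλ = λ`. -/
theorem stmt_11 {E : Type*} [NormedAddCommGroup E] [NormedSpace ℝ E]
    (lam : E → (E →L[ℝ] ℝ)) (Z : E → E)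
    (hlam : Differentiable ℝ lam) (hZ : Differentiable ℝ Z)
    (hLiouville : ∀ p v : E,
      (fderiv ℝ lam p (Z p)) v - (fderiv ℝ lam p v) (Z p) = lam p v)
    (f : E → ℝ) (hf : Differentiable ℝ f)
    (h : E × ℝ → ℝ) (hh : Differentiable ℝ h)
    (hhZ : ∀ (q : E) (θ : ℝ), fderiv ℝ (fun x : E => h (x, θ)) q (Z q) = h (q, θ))
    (t : ℝ)
    (Lam : E × ℝ × ℝ → ((E × ℝ × ℝ) →L[ℝ] ℝ))
    (hLam : ∀ (q : E) (s θ : ℝ) (v : E) (c d : ℝ),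
      Lam (q, s, θ) (v, c, d) = lam q v + (2 * s + t * h (q, θ)) * d)
    (p : E) (s θ : ℝ) (D : ℝ)
    (hD : D = 2 * s ^ 2 + fderiv ℝ f p (Z p)) (hDpos : 0 < D)
    (Y : E × ℝ × ℝ)
    (hY : Y = (h (p, θ) / (2 * D)) • (((2 * s) • Z p, -fderiv ℝ f p (Z p), 0) : E × ℝ × ℝ)) :
    fderiv ℝ (fun x : E × ℝ × ℝ => x.2.1 ^ 2 + f x.1) (p, s, θ) Y = 0 ∧
    Lam (p, s, θ) Y = 0 ∧
    (∀ (v : E) (c d : ℝ),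
      (fderiv ℝ Lam (p, s, θ) Y) (v, c, d) - (fderiv ℝ Lam (p, s, θ) (v, c, d)) Y
        = (2 * s * h (p, θ) / (2 * D)) * Lam (p, s, θ) (v, c, d) - h (p, θ) * d) :=
  stmt_11_general lam Z hlam hLiouville f hf h hh hhZ t Lam hLam p s θ D hD hDpos Y hY
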